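/- arXiv:math/0702809 — 2 statements merged into one kernel-verified Lean document; each statement's English description precedes it below -/
import Mathlib

section
/- For n ≥ 5, every n-dimensional naturally graded complex filiform Zinbiel algebra is isomorphic to the algebra F_n with basis e_1, …, e_n and multiplication e_i∘e_j = C(i+j−1, j)·e_{i+j} for 2 ≤ i+j ≤ n−1, all other products of basis vectors being zero. -/
/-- A bilinear multiplication `mul` is a *Zinbiel* multiplication if it satisfies
`(x∘y)∘z = x∘(y∘z) + x∘(z∘y)`. -/
def IsZinbiel {K A : Type*} [CommRing K] [AddCommGroup A] [Module K A]
    (mul : A →ₗ[K] A →ₗ[K] A) : Prop :=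
  ∀ x y z : A, mul (mul x y) z = mul x (mul y z) + mul x (mul z y)

/-- The descending series of a (Zinbiel) algebra: `zpow mul i` is `A^i`,
with `A^1 = A` and `A^{k+1} = A ∘ A^k` (we also set `A^0 = A` for convenience). -/
def zpow {K A : Type*} [CommRing K] [AddCommGroup A] [Module K A]
    (mul : A →ₗ[K] A →ₗ[K] A) : ℕ → Submodule K A
  | 0 => ⊤
  | 1 => ⊤
  | (k+2) => Submodule.span K {z | ∃ a : A, ∃ b ∈ zpow mul (k+1), z = mul a b}

/-- The bilinear multiplication on `Fin n → ℂ` determined by structure constants `c`: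
`e_i ∘ e_j = ∑ k, c i j k • e_k`. -/
noncomputable def mulOf (n : ℕ) (c : Fin n → Fin n → Fin n → ℂ) :
    (Fin n → ℂ) →ₗ[ℂ] (Fin n → ℂ) →ₗ[ℂ] (Fin n → ℂ) :=
  LinearMap.mk₂ ℂ (fun x y k => ∑ i, ∑ j, x i * y j * c i j k)
    (fun x x' y => by
      funext k
      simp [add_mul, Finset.sum_add_distrib])
    (fun a x y => by
      funext k
      simp [Finset.mul_sum, mul_assoc])
    (fun x y y' => by
      funext k
      simp [mul_add, add_mul, Finset.sum_add_distrib])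
    (fun a x y => by
      funext k
      simp [Finset.mul_sum, mul_assoc, mul_left_comm])


lemma mulOf_single (n : ℕ) (c : Fin n → Fin n → Fin n → ℂ) (i j : Fin n) :
    mulOf n c (Pi.single i 1) (Pi.single j 1) = c i j := by
  funext k
  simp only [mulOf, LinearMap.mk₂_apply]
  simp [Pi.single_apply, ite_mul, one_mul, zero_mul, Finset.sum_ite_eq]

/-- Two bilinear multiplications give isomorphic algebras if there is a linear
equivalence intertwining them. -/
def Isom {A B : Type*} [AddCommGroup A] [Module ℂ A] [AddCommGroup B] [Module ℂ B]
    (mulA : A →ₗ[ℂ] A →ₗ[ℂ] A) (mulB : B →ₗ[ℂ] B →ₗ[ℂ] B) : Prop :=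
  ∃ f : A ≃ₗ[ℂ] B, ∀ x y : A, f (mulA x y) = mulB (f x) (f y)

/-- Structure constants of the nul-filiform algebra `NF_n`:
`e_i ∘ e_j = C(i+j-1, j) e_{i+j}` for `2 ≤ i+j ≤ n` (1-indexed). -/
noncomputable def NFc (n : ℕ) : Fin n → Fin n → Fin n → ℂ := fun i j k =>
  if (i : ℕ) + j + 1 = (k : ℕ) then (((i : ℕ) + j + 1).choose ((j : ℕ) + 1) : ℂ) else 0

/-- The nul-filiform Zinbiel algebra `NF_n` (as a multiplication on `Fin n → ℂ`). -/
noncomputable def NFmul (n : ℕ) : (Fin n → ℂ) →ₗ[ℂ] (Fin n → ℂ) →ₗ[ℂ] (Fin n → ℂ) :=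
  mulOf n (NFc n)

/-- Structure constants of the filiform algebra `F_n = F_n^1`:
`e_i ∘ e_j = C(i+j-1, j) e_{i+j}` for `2 ≤ i+j ≤ n-1` (1-indexed), other products zero. -/
noncomputable def F1c (n : ℕ) : Fin n → Fin n → Fin n → ℂ := fun i j k =>
  if (i : ℕ) + j + 1 = (k : ℕ) ∧ (k : ℕ) + 1 ≤ n - 1 then
    (((i : ℕ) + j + 1).choose ((j : ℕ) + 1) : ℂ) else 0

/-- Structure constants of `F_n^2`: those of `F_n^1` together with `e_n ∘ e_1 = e_{n-1}`. -/
noncomputable def F2c (n : ℕ) : Fin n → Fin n → Fin n → ℂ := fun i j k =>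
  F1c n i j k + (if (i : ℕ) = n - 1 ∧ (j : ℕ) = 0 ∧ (k : ℕ) = n - 2 then 1 else 0)

/-- Structure constants of `F_n^3`: those of `F_n^1` together with `e_n ∘ e_n = e_{n-1}`. -/
noncomputable def F3c (n : ℕ) : Fin n → Fin n → Fin n → ℂ := fun i j k =>
  F1c n i j k + (if (i : ℕ) = n - 1 ∧ (j : ℕ) = n - 1 ∧ (k : ℕ) = n - 2 then 1 else 0)

namespace ZinbielAux

variable {A : Type*} [AddCommGroup A] [Module ℂ A]

/-- `pw mul x k` is `x^{k+1}` (right-normed powers). -/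
def pw (mul : A →ₗ[ℂ] A →ₗ[ℂ] A) (x : A) : ℕ → A
  | 0 => x
  | (k+1) => mul x (pw mul x k)

variable {mul : A →ₗ[ℂ] A →ₗ[ℂ] A}

lemma pw_mul (hz : IsZinbiel mul) (x : A) :
    ∀ N i j, i + j = N →
      mul (pw mul x i) (pw mul x j) = (((i+j+1).choose (j+1) : ℕ) : ℂ) • pw mul x (i+j+1) := by
  intro N
  induction N using Nat.strong_induction_on with
  | _ N ih =>
    intro i j hij
    match i with
    | 0 =>
      show mul x (pw mul x j) = _
      rw [show (0+j+1).choose (j+1) = 1 by rw [Nat.zero_add, Nat.choose_self]]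
      rw [show (0:ℕ)+j+1 = j+1 by omega]
      simp [pw]
    | (i+1) =>
      have h1 : mul (pw mul x (i+1)) (pw mul x j)
          = mul x (mul (pw mul x i) (pw mul x j)) + mul x (mul (pw mul x j) (pw mul x i)) := by
        show mul (mul x (pw mul x i)) (pw mul x j) = _
        rw [hz]
      have e1 := ih (i+j) (by omega) i j rfl
      have e2 := ih (i+j) (by omega) j i (by omega)
      rw [h1, e1, e2]
      have hsymm : (j+i+1).choose (i+1) = (i+j+1).choose j := by
        have := Nat.choose_symm (n := i+j+1) (k := i+1) (by omega)
        simp only [show i+j+1-(i+1) = j by omega] at this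
        rw [show j+i+1 = i+j+1 by omega, this]
      have hpw : pw mul x (j+i+1) = pw mul x (i+j+1) := by rw [show j+i+1 = i+j+1 by omega]
      rw [hsymm, hpw, map_smul, map_smul,
        show (mul x) (pw mul x (i+j+1)) = pw mul x (i+j+1+1) from rfl, ← add_smul,
        show i+1+j+1 = i+j+1+1 by omega]
      congr 1
      have hp := Nat.choose_succ_succ (i+j+1) j
      rw [show (i+j+1+1) = (i+j+1)+1 from rfl, hp]
      push_cast
      ring

lemma pw_mul' (hz : IsZinbiel mul) (x : A) (i j : ℕ) :
    mul (pw mul x i) (pw mul x j) = (((i+j+1).choose (j+1) : ℕ) : ℂ) • pw mul x (i+j+1) :=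
  pw_mul hz x (i+j) i j rfl

lemma pw_eq_zero (x : A) {k : ℕ} (h : pw mul x k = 0) {m : ℕ} (hm : k ≤ m) :
    pw mul x m = 0 := by
  induction m with
  | zero => simpa [Nat.le_zero.mp hm] using h
  | succ m ihm =>
    rcases Nat.lt_or_ge k (m+1) with h' | h'
    · have := ihm (by omega)
      show mul x (pw mul x m) = 0
      rw [this, map_zero]
    · have : k = m + 1 := by omega
      rwa [this] at h

end ZinbielAux

open ZinbielAux Polynomial in


/-- For `n ≥ 5`, every `n`-dimensional naturally graded complex filiform
Zinbiel algebra is isomorphic to `F_n`.  Here a filiform algebra is *naturally graded* if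
it carries a grading `A = ⊕_{i ≥ 1} W_i` with `W_i ∘ W_j ⊆ W_{i+j}` realizing the natural
filtration, i.e. `A^k = ⊕_{i ≥ k} W_i` for all `k ≥ 1` (equivalently, `A ≅ gr A`). -/
theorem naturally_graded_filiform_iso_F (n : ℕ) (hn : 5 ≤ n)
    (A : Type*) [AddCommGroup A] [Module ℂ A] [FiniteDimensional ℂ A]
    (mul : A →ₗ[ℂ] A →ₗ[ℂ] A) (hzin : IsZinbiel mul)
    (hdim : Module.finrank ℂ A = n)
    (hfil : ∀ i : ℕ, 2 ≤ i → i ≤ n → Module.finrank ℂ (zpow mul i) = n - i)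
    (W : ℕ → Submodule ℂ A) (hW0 : W 0 = ⊥)
    (hindep : iSupIndep W) (hsup : (⨆ i, W i) = ⊤)
    (hgraded : ∀ i j : ℕ, ∀ a ∈ W i, ∀ b ∈ W j, mul a b ∈ W (i + j))
    (hnatural : ∀ k : ℕ, 1 ≤ k → zpow mul k = ⨆ i ≥ k, W i) :
    Isom mul (mulOf n (F1c n)) := by
  classical
  -- Part A : dimensions
  have hWsup : ∀ (k i : ℕ), k ≤ i → W i ≤ ⨆ i ≥ k, W i :=
    fun k i hi => le_iSup₂ (f := fun j (_ : j ≥ k) => W j) i hi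
  have hWsup' : ∀ (k i : ℕ), i ≠ k → W i ≤ ⨆ j ≠ k, W j :=
    fun k i hi => le_iSup₂ (f := fun j (_ : j ≠ k) => W j) i hi
  have hzn : zpow mul n = ⊥ := by
    have h := hfil n (by omega) le_rfl
    rw [Nat.sub_self] at h
    exact Submodule.finrank_eq_zero.mp h
  have hWbot : ∀ i, n ≤ i → W i = ⊥ := by
    intro i hi
    have hle : W i ≤ zpow mul n := by
      rw [hnatural n (by omega)]
      exact hWsup n i hi
    rw [hzn] at hle
    exact le_bot_iff.mp hle
  have hWle : ∀ i, 1 ≤ i → W i ≤ zpow mul i := by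
    intro i hi
    rw [hnatural i hi]
    exact hWsup _ _ le_rfl
  have hdisj : ∀ k, 1 ≤ k → Disjoint (W k) (zpow mul (k+1)) := by
    intro k hk
    refine (hindep k).mono_right ?_
    rw [hnatural (k+1) (by omega)]
    exact iSup₂_le fun i hi => hWsup' _ _ (by omega)
  have hsplit : ∀ k, 1 ≤ k → zpow mul k = W k ⊔ zpow mul (k+1) := by
    intro k hk
    rw [hnatural k hk, hnatural (k+1) (by omega)]
    apply le_antisymm
    · refine iSup₂_le fun i hi => ?_
      rcases eq_or_lt_of_le hi with h | h
      · exact h ▸ le_sup_left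
      · exact le_trans (hWsup _ _ (by omega)) le_sup_right
    · exact sup_le (hWsup _ _ le_rfl) (iSup₂_le fun i hi => hWsup _ _ (by omega))
  have hrk : ∀ k, 1 ≤ k → Module.finrank ℂ (zpow mul k)
      = Module.finrank ℂ (W k) + Module.finrank ℂ (zpow mul (k+1)) := by
    intro k hk
    have h := Submodule.finrank_sup_add_finrank_inf_eq (W k) (zpow mul (k+1))
    rw [(hdisj k hk).eq_bot, finrank_bot, add_zero, ← hsplit k hk] at h
    omega
  have hW1rk : Module.finrank ℂ (W 1) = 2 := by
    have h := hrk 1 (by omega)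
    have h1 : zpow mul 1 = (⊤ : Submodule ℂ A) := rfl
    rw [h1, finrank_top, hdim, hfil 2 (by omega) (by omega)] at h
    omega
  have hWkrk : ∀ k, 2 ≤ k → k ≤ n-1 → Module.finrank ℂ (W k) = 1 := by
    intro k h2 h3
    have h := hrk k (by omega)
    rw [hfil k (by omega) (by omega), hfil (k+1) (by omega) (by omega)] at h
    omega
  -- Part B : products span the next graded piece
  have hprod : ∀ k, 1 ≤ k →
      W (k+1) = Submodule.span ℂ {z | ∃ a ∈ W 1, ∃ b ∈ W k, z = mul a b} := by
    intro k hk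
    set S := Submodule.span ℂ {z | ∃ a ∈ W 1, ∃ b ∈ W k, z = mul a b} with hS
    have hSle : S ≤ W (k+1) := by
      rw [Submodule.span_le]
      rintro z ⟨a, ha, b, hb, rfl⟩
      have h := hgraded 1 k a ha b hb
      rwa [Nat.add_comm] at h
    have hzk1 : zpow mul (k+1) ≤ S ⊔ zpow mul (k+2) := by
      obtain ⟨m, rfl⟩ : ∃ m, k = m + 1 := ⟨k-1, by omega⟩
      rw [show zpow mul (m+1+1) = Submodule.span ℂ
        {z | ∃ a : A, ∃ b ∈ zpow mul (m+1), z = mul a b} from rfl, Submodule.span_le]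
      rintro z ⟨a, b, hb, rfl⟩
      rw [hnatural (m+1) (by omega)] at hb
      refine Submodule.iSup_induction _ (motive := fun b => ∀ a : A, mul a b ∈ S ⊔ zpow mul (m+1+2))
        hb ?_ (by simp) (fun b₁ b₂ h₁ h₂ a => by simp only [map_add]; exact Submodule.add_mem _ (h₁ a) (h₂ a)) a
      intro i b hbi a
      by_cases him : m+1 ≤ i
      · rw [iSup_pos him] at hbi
        have ha : a ∈ ⨆ j, W j := by rw [hsup]; trivial
        refine Submodule.iSup_induction _ (motive := fun a => mul a b ∈ S ⊔ zpow mul (m+1+2))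
          ha ?_ (by simp) (fun a₁ a₂ h₁ h₂ => by simp only [map_add, LinearMap.add_apply]; exact Submodule.add_mem _ h₁ h₂)
        intro j a haj
        match j with
        | 0 =>
          rw [hW0, Submodule.mem_bot] at haj
          simp [haj]
        | 1 =>
          by_cases hik : i = m+1
          · subst hik
            exact le_sup_left (α := Submodule ℂ A) (Submodule.subset_span ⟨a, haj, b, hbi, rfl⟩)
          · refine le_sup_right (α := Submodule ℂ A) ?_
            have h1 : mul a b ∈ W (1 + i) := hgraded 1 i a haj b hbi
            have h2 : W (1+i) ≤ zpow mul (m+1+2) := by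
              rw [hnatural (m+3) (by omega)]
              exact hWsup _ _ (by omega)
            exact h2 h1
        | (j+2) =>
          refine le_sup_right (α := Submodule ℂ A) ?_
          have h1 : mul a b ∈ W (j+2+i) := hgraded (j+2) i a haj b hbi
          have h2 : W (j+2+i) ≤ zpow mul (m+1+2) := by
            rw [hnatural (m+3) (by omega)]
            exact hWsup _ _ (by omega)
          exact h2 h1
      · rw [iSup_neg him, Submodule.mem_bot] at hbi
        simp [hbi]
    refine le_antisymm ?_ hSle
    intro w hw
    have hw1 : w ∈ S ⊔ zpow mul (k+2) := hzk1 (hWle (k+1) (by omega) hw)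
    rw [Submodule.mem_sup] at hw1
    obtain ⟨s, hs, r, hr, hsr⟩ := hw1
    have hrW : r ∈ W (k+1) := by
      have : r = w - s := by rw [← hsr]; abel
      rw [this]
      exact Submodule.sub_mem _ hw (hSle hs)
    have : r = 0 := (Submodule.disjoint_def.mp (hdisj (k+1) (by omega))) r hrW hr
    rw [← hsr, this, add_zero]
    exact hs
  -- Part C : choose generators
  have hech : ∀ k : ℕ, ∃ w : A, (2 ≤ k → k ≤ n-1 →
      w ∈ W k ∧ w ≠ 0 ∧ W k = Submodule.span ℂ {w}) := by
    intro k
    by_cases h : 2 ≤ k ∧ k ≤ n-1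
    · obtain ⟨h2, h3⟩ := h
      have hne : W k ≠ ⊥ := by
        intro hb
        have h1 := hWkrk k h2 h3
        rw [hb, finrank_bot] at h1
        omega
      obtain ⟨w, hw, hw0⟩ := Submodule.exists_mem_ne_zero_of_ne_bot hne
      refine ⟨w, fun _ _ => ⟨hw, hw0, ?_⟩⟩
      have hle : Submodule.span ℂ {w} ≤ W k := by
        rw [Submodule.span_le]; simpa using hw
      refine (Submodule.eq_of_le_of_finrank_le hle ?_).symm
      rw [hWkrk k h2 h3, finrank_span_singleton hw0]
    · exact ⟨0, fun h2 h3 => absurd ⟨h2, h3⟩ h⟩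
  choose e he using hech
  have hW1ne : W 1 ≠ ⊥ := by
    intro hb
    have h1 := hW1rk
    rw [hb, finrank_bot] at h1
    omega
  obtain ⟨u, hu, hu0⟩ := Submodule.exists_mem_ne_zero_of_ne_bot hW1ne
  have hspanu_lt : Submodule.span ℂ {u} < W 1 := by
    refine lt_of_le_of_ne (by rw [Submodule.span_le]; simpa using hu) ?_
    intro heq
    have h1 := finrank_span_singleton (K := ℂ) hu0
    rw [heq, hW1rk] at h1
    omega
  obtain ⟨v, hv, hvnot⟩ := SetLike.exists_of_lt hspanu_lt
  have hWuv : W 1 = Submodule.span ℂ {u, v} := by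
    have hle : Submodule.span ℂ {u, v} ≤ W 1 :=
      Submodule.span_le.mpr (Set.insert_subset_iff.mpr ⟨hu, Set.singleton_subset_iff.mpr hv⟩)
    refine (Submodule.eq_of_le_of_finrank_le hle ?_).symm
    rw [hW1rk]
    have hlt : Submodule.span ℂ {u} < Submodule.span ℂ ({u, v} : Set A) := by
      refine lt_of_le_of_ne (Submodule.span_mono (by simp)) fun heq => hvnot ?_
      rw [heq]
      exact Submodule.subset_span (by simp)
    have h1 : Module.finrank ℂ (Submodule.span ℂ ({u} : Set A)) = 1 :=
      finrank_span_singleton hu0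
    have h2 := Submodule.finrank_lt_finrank_of_lt hlt
    omega
  have hcoef : ∀ k, 2 ≤ k → k ≤ n-1 → ∀ w ∈ W k, ∃ c : ℂ, w = c • e k := by
    intro k h2 h3 w hw
    rw [(he k h2 h3).2.2, Submodule.mem_span_singleton] at hw
    obtain ⟨c, hc⟩ := hw
    exact ⟨c, hc.symm⟩
  have hmulW : ∀ (a : A), a ∈ W 1 → ∀ k, 1 ≤ k → ∀ b ∈ W k, mul a b ∈ W (k+1) := by
    intro a ha k hk b hb
    have h1 := hgraded 1 k a ha b hb
    rwa [Nat.add_comm] at h1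
  -- structure scalars p k, q k for k ∈ [2, n-2]
  have hpqch : ∀ k : ℕ, ∃ pq : ℂ × ℂ, (2 ≤ k → k ≤ n-2 →
      mul u (e k) = pq.1 • e (k+1) ∧ mul v (e k) = pq.2 • e (k+1)
        ∧ (pq.1 ≠ 0 ∨ pq.2 ≠ 0)) := by
    intro k
    by_cases h : 2 ≤ k ∧ k ≤ n-2
    · obtain ⟨h2, h3⟩ := h
      have hek := he k h2 (by omega)
      obtain ⟨p, hp⟩ := hcoef (k+1) (by omega) (by omega) _ (hmulW u hu k (by omega) (e k) hek.1)
      obtain ⟨q, hq⟩ := hcoef (k+1) (by omega) (by omega) _ (hmulW v hv k (by omega) (e k) hek.1)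
      refine ⟨(p, q), fun _ _ => ⟨hp, hq, ?_⟩⟩
      by_contra hcon
      push_neg at hcon
      obtain ⟨hp0, hq0⟩ := hcon
      have hp0' : p = 0 := hp0
      have hq0' : q = 0 := hq0
      have hzero : ∀ z ∈ {z | ∃ a ∈ W 1, ∃ b ∈ W k, z = mul a b}, z = (0 : A) := by
        rintro z ⟨a, ha, b, hb, rfl⟩
        rw [hWuv, Submodule.mem_span_pair] at ha
        obtain ⟨α, β, rfl⟩ := ha
        obtain ⟨c, rfl⟩ := hcoef k h2 (by omega) b hb
        simp only [map_add, map_smul, LinearMap.add_apply, LinearMap.smul_apply, hp, hq,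
          hp0', hq0', zero_smul, smul_zero, add_zero]
      have hWk1 := hprod k (by omega)
      have hbot : W (k+1) ≤ ⊥ := by
        rw [hWk1, Submodule.span_le]
        intro z hz
        simp [hzero z hz]
      have hek1 := he (k+1) (by omega) (by omega)
      exact hek1.2.1 ((Submodule.mem_bot ℂ).mp (hbot hek1.1))
    · exact ⟨(0,0), fun h2 h3 => absurd ⟨h2, h3⟩ h⟩
  choose pq hpq using hpqch
  -- quadratic scalars
  obtain ⟨cuu, hcuu⟩ := hcoef 2 le_rfl (by omega) _ (hmulW u hu 1 le_rfl u hu)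
  obtain ⟨cuv, hcuv⟩ := hcoef 2 le_rfl (by omega) _ (hmulW u hu 1 le_rfl v hv)
  obtain ⟨cvu, hcvu⟩ := hcoef 2 le_rfl (by omega) _ (hmulW v hv 1 le_rfl u hu)
  obtain ⟨cvv, hcvv⟩ := hcoef 2 le_rfl (by omega) _ (hmulW v hv 1 le_rfl v hv)
  -- Part D : existence of a good generator x
  have hxexists : ∃ x, x ∈ W 1 ∧ ∀ m, 2 ≤ m → m ≤ n-1 →
      ∃ c : ℂ, c ≠ 0 ∧ ZinbielAux.pw mul x (m-1) = c • e m := by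
    by_cases hdeg : cuu = 0 ∧ cvv = 0 ∧ cuv + cvu = 0
    · -- degenerate case : impossible
      exfalso
      obtain ⟨hd1, hd2, hd3⟩ := hdeg
      have he2 := he 2 le_rfl (by omega)
      have he3 := he 3 (by omega) (by omega)
      have he4 := he 4 (by omega) (by omega)
      have hcuvne : cuv ≠ 0 := by
        intro hc0
        have hcvu0 : cvu = 0 := by linear_combination hd3 - hc0
        have hzero : ∀ z ∈ {z | ∃ a ∈ W 1, ∃ b ∈ W 1, z = mul a b}, z = (0:A) := by
          rintro z ⟨a, ha, b, hb, rfl⟩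
          rw [hWuv, Submodule.mem_span_pair] at ha hb
          obtain ⟨α, β, rfl⟩ := ha
          obtain ⟨γ, δ, rfl⟩ := hb
          simp only [map_add, map_smul, LinearMap.add_apply, LinearMap.smul_apply,
            hcuu, hcuv, hcvu, hcvv, hd1, hd2, hc0, hcvu0, zero_smul, smul_zero, add_zero]
        have hbot : W 2 ≤ ⊥ := by
          rw [hprod 1 le_rfl, Submodule.span_le]
          intro z hz
          simp [hzero z hz]
        exact he2.2.1 ((Submodule.mem_bot ℂ).mp (hbot he2.1))
      have hmuu : mul u u = 0 := by rw [hcuu, hd1, zero_smul]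
      have hmvv : mul v v = 0 := by rw [hcvv, hd2, zero_smul]
      have hcvu' : mul v u = (-cuv) • e 2 := by
        rw [hcvu]
        congr 1
        linear_combination hd3
      have he2u : mul (e 2) u = 0 := by
        have h := hzin u v u
        have hsum : mul v u + mul u v = 0 := by
          rw [hcuv, hcvu', ← add_smul]
          norm_num
        rw [← map_add, hsum, map_zero, hcuv] at h
        simp only [map_smul, LinearMap.smul_apply] at h
        rcases smul_eq_zero.mp h with h' | h'
        · exact absurd h' hcuvne
        · exact h'
      have he2v : mul (e 2) v = 0 := by
        have h := hzin u v v
        rw [hmvv, map_zero, add_zero, hcuv] at h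
        simp only [map_smul, LinearMap.smul_apply] at h
        rcases smul_eq_zero.mp h with h' | h'
        · exact absurd h' hcuvne
        · exact h'
      obtain ⟨hp2, hq2, hd23⟩ := hpq 2 le_rfl (by omega)
      obtain ⟨hp3, hq3, hd33⟩ := hpq 3 (by omega) (by omega)
      have hsmulz : ∀ c : ℂ, c • e 4 = 0 → c = 0 := by
        intro c hc
        rcases smul_eq_zero.mp hc with h' | h'
        · exact h'
        · exact absurd h' he4.2.1
      have h1 : (pq 2).1 * (pq 3).1 = 0 := by
        have h := hzin u u (e 2)
        rw [hmuu, he2u] at h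
        simp only [map_zero, LinearMap.zero_apply, add_zero] at h
        rw [hp2] at h
        simp only [map_smul, hp3, smul_smul] at h
        exact hsmulz _ h.symm
      have h2 : (pq 2).2 * (pq 3).2 = 0 := by
        have h := hzin v v (e 2)
        rw [hmvv, he2v] at h
        simp only [map_zero, LinearMap.zero_apply, add_zero] at h
        rw [hq2] at h
        simp only [map_smul, hq3, smul_smul] at h
        exact hsmulz _ h.symm
      have hA : cuv • mul (e 2) (e 2) = ((pq 2).2 * (pq 3).1) • e 4 := by
        have h := hzin u v (e 2)
        rw [he2v] at h
        simp only [map_zero, add_zero] at h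
        rw [hq2, hcuv] at h
        simp only [map_smul, LinearMap.smul_apply, hp3, smul_smul] at h
        exact h
      have hB : (-cuv) • mul (e 2) (e 2) = ((pq 2).1 * (pq 3).2) • e 4 := by
        have h := hzin v u (e 2)
        rw [he2u] at h
        simp only [map_zero, add_zero] at h
        rw [hp2, hcvu'] at h
        simp only [map_smul, LinearMap.smul_apply, hq3, smul_smul] at h
        exact h
      have hsum0 : (pq 2).2 * (pq 3).1 + (pq 2).1 * (pq 3).2 = 0 := by
        apply hsmulz
        rw [add_smul, ← hA, ← hB, ← add_smul]
        norm_num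
      rcases hd23 with hne | hne
      · have hp30 : (pq 3).1 = 0 := by
          rcases mul_eq_zero.mp h1 with h' | h'
          · exact absurd h' hne
          · exact h'
        have hq3ne : (pq 3).2 ≠ 0 := by
          rcases hd33 with h' | h'
          · exact absurd hp30 h'
          · exact h'
        have : (pq 2).1 * (pq 3).2 = 0 := by linear_combination hsum0 - (pq 2).2 * hp30
        exact mul_ne_zero hne hq3ne this
      · have hq30 : (pq 3).2 = 0 := by
          rcases mul_eq_zero.mp h2 with h' | h'
          · exact absurd h' hne
          · exact h'
        have hp3ne : (pq 3).1 ≠ 0 := by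
          rcases hd33 with h' | h'
          · exact h'
          · exact absurd hq30 h'
        have : (pq 2).2 * (pq 3).1 = 0 := by linear_combination hsum0 - (pq 2).1 * hq30
        exact mul_ne_zero hne hp3ne this
    · -- nondegenerate case : polynomial argument
      set Qp : Polynomial ℂ := Polynomial.C cuu + Polynomial.C (cuv + cvu) * Polynomial.X
        + Polynomial.C cvv * Polynomial.X ^ 2 with hQp
      have hQne : Qp ≠ 0 := by
        intro h0
        apply hdeg
        have e0 := congrArg (Polynomial.eval 0) h0
        have e1 := congrArg (Polynomial.eval 1) h0
        have e2 := congrArg (Polynomial.eval (-1)) h0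
        simp only [hQp, Polynomial.eval_add, Polynomial.eval_mul, Polynomial.eval_C,
          Polynomial.eval_X, Polynomial.eval_pow, Polynomial.eval_zero] at e0 e1 e2
        norm_num at e0 e1 e2
        refine ⟨e0, ?_, ?_⟩
        · linear_combination (e1 + e2) / 2 - e0
        · linear_combination (e1 - e2) / 2
      set g : Polynomial ℂ := Qp * ∏ k ∈ Finset.Icc 2 (n-2),
        (Polynomial.C (pq k).1 + Polynomial.C (pq k).2 * Polynomial.X) with hg
      have hgne : g ≠ 0 := by
        refine mul_ne_zero hQne (Finset.prod_ne_zero_iff.mpr fun k hk => ?_)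
        rw [Finset.mem_Icc] at hk
        obtain ⟨hpk, hqk, hdk⟩ := hpq k hk.1 hk.2
        intro h0
        have e0 := congrArg (Polynomial.eval 0) h0
        have e1 := congrArg (Polynomial.eval 1) h0
        simp only [Polynomial.eval_add, Polynomial.eval_mul, Polynomial.eval_C,
          Polynomial.eval_X, Polynomial.eval_zero] at e0 e1
        norm_num at e0 e1
        rcases hdk with h' | h'
        · exact h' e0
        · exact h' (by linear_combination e1 - e0)
      obtain ⟨β, hβ⟩ := Infinite.exists_notMem_finset g.roots.toFinset
      have hgeval : Polynomial.eval β g ≠ 0 := by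
        intro h0
        exact hβ (Multiset.mem_toFinset.mpr ((Polynomial.mem_roots hgne).mpr h0))
      have hfac : ∀ k ∈ Finset.Icc 2 (n-2), (pq k).1 + (pq k).2 * β ≠ 0 := by
        intro k hk h0
        apply hgeval
        rw [hg, Polynomial.eval_mul]
        apply mul_eq_zero_of_right
        rw [Polynomial.eval_prod]
        refine Finset.prod_eq_zero hk ?_
        simp only [Polynomial.eval_add, Polynomial.eval_mul, Polynomial.eval_C,
          Polynomial.eval_X]
        exact h0
      have hQeval : Polynomial.eval β Qp ≠ 0 := by
        intro h0
        apply hgeval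
        rw [hg, Polynomial.eval_mul, h0, zero_mul]
      refine ⟨u + β • v, Submodule.add_mem _ hu (Submodule.smul_mem _ β hv), ?_⟩
      have hx2 : mul (u + β • v) (u + β • v) = (Polynomial.eval β Qp) • e 2 := by
        simp only [map_add, map_smul, LinearMap.add_apply, LinearMap.smul_apply,
          hcuu, hcuv, hcvu, hcvv, hQp, Polynomial.eval_add, Polynomial.eval_mul,
          Polynomial.eval_C, Polynomial.eval_X, Polynomial.eval_pow]
        match_scalars
        ring
      have hstep : ∀ k, 2 ≤ k → k ≤ n-2 →
          mul (u + β • v) (e k) = ((pq k).1 + (pq k).2 * β) • e (k+1) := by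
        intro k h2 h3
        obtain ⟨hpk, hqk, _⟩ := hpq k h2 h3
        simp only [map_add, map_smul, LinearMap.add_apply, LinearMap.smul_apply, hpk, hqk]
        match_scalars
        ring
      intro m
      induction m with
      | zero => omega
      | succ m ih =>
        intro h2 h3
        rcases Nat.lt_or_ge m 2 with hm | hm
        · -- m + 1 = 2
          have hm1 : m = 1 := by omega
          subst hm1
          refine ⟨Polynomial.eval β Qp, hQeval, ?_⟩
          show mul (u + β • v) (ZinbielAux.pw mul (u + β • v) 0) = _
          rw [show ZinbielAux.pw mul (u + β • v) 0 = u + β • v from rfl, hx2]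
        · obtain ⟨c, hc0, hcm⟩ := ih (by omega) (by omega)
          refine ⟨c * ((pq m).1 + (pq m).2 * β), mul_ne_zero hc0
            (hfac m (Finset.mem_Icc.mpr ⟨hm, by omega⟩)), ?_⟩
          have hpwm : ZinbielAux.pw mul (u + β • v) (m+1-1)
              = mul (u + β • v) (ZinbielAux.pw mul (u + β • v) (m-1)) := by
            rw [show m+1-1 = (m-1)+1 by omega]
            rfl
          rw [hpwm, hcm, map_smul, hstep m hm (by omega), smul_smul]
  obtain ⟨x, hxW, hxc⟩ := hxexists
  -- Part E : powers of x, and the complementary generator y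
  have hpwW : ∀ m : ℕ, ZinbielAux.pw mul x m ∈ W (m+1) := by
    intro m
    induction m with
    | zero => exact hxW
    | succ m ihm => exact hmulW x hxW (m+1) (by omega) _ ihm
  have hpwzero : ∀ m, n-1 ≤ m → ZinbielAux.pw mul x m = 0 := by
    intro m hm
    have h1 := hpwW (n-1)
    rw [show n-1+1 = n by omega, hWbot n le_rfl, Submodule.mem_bot] at h1
    exact ZinbielAux.pw_eq_zero x h1 hm
  have hpw2 : ZinbielAux.pw mul x 2 ≠ 0 := by
    obtain ⟨c3, hc30, hc3⟩ := hxc 3 (by omega) (by omega)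
    rw [show (2:ℕ) = 3-1 from rfl, hc3]
    simp only [ne_eq, smul_eq_zero, not_or]
    exact ⟨hc30, (he 3 (by omega) (by omega)).2.1⟩
  have hpw1 : ZinbielAux.pw mul x 1 ≠ 0 := by
    intro h0
    exact hpw2 (ZinbielAux.pw_eq_zero x h0 (by omega))
  have hx0 : x ≠ 0 := by
    intro h0
    apply hpw1
    show mul x (ZinbielAux.pw mul x 0) = 0
    rw [show ZinbielAux.pw mul x 0 = x from rfl, h0]
    simp
  obtain ⟨c2, hc20, hc2⟩ := hxc 2 le_rfl (by omega)
  have he2pw : e 2 = c2⁻¹ • ZinbielAux.pw mul x 1 := by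
    rw [show ZinbielAux.pw mul x (2-1) = ZinbielAux.pw mul x 1 from rfl] at hc2
    rw [hc2, inv_smul_smul₀ hc20]
  have hyex : ∃ y, y ∈ W 1 ∧ y ∉ Submodule.span ℂ {x} ∧ mul y x = 0 := by
    have hlt : Submodule.span ℂ {x} < W 1 := by
      refine lt_of_le_of_ne (by rw [Submodule.span_le]; simpa using hxW) ?_
      intro heq
      have h1 := finrank_span_singleton (K := ℂ) hx0
      rw [heq, hW1rk] at h1
      omega
    obtain ⟨y₀, hy₀W, hy₀⟩ := SetLike.exists_of_lt hlt
    obtain ⟨d, hd⟩ := hcoef 2 le_rfl (by omega) _ (hmulW y₀ hy₀W 1 le_rfl x hxW)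
    refine ⟨y₀ - (d * c2⁻¹) • x, Submodule.sub_mem _ hy₀W (Submodule.smul_mem _ _ hxW),
      ?_, ?_⟩
    · intro hmem
      apply hy₀
      have hrw : y₀ = (y₀ - (d * c2⁻¹) • x) + (d * c2⁻¹) • x := by abel
      rw [hrw]
      exact Submodule.add_mem _ hmem
        (Submodule.smul_mem _ _ (Submodule.mem_span_singleton_self x))
    · have hxx2 : mul x x = ZinbielAux.pw mul x 1 := rfl
      rw [map_sub, LinearMap.sub_apply, map_smul, LinearMap.smul_apply, hd, hxx2, he2pw,
        smul_smul, sub_self]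
  obtain ⟨y, hyW, hynot, hyx⟩ := hyex
  have hyxk : ∀ k, mul y (ZinbielAux.pw mul x k) = 0 := by
    intro k
    induction k with
    | zero => exact hyx
    | succ k ihk =>
      have h := hzin y x (ZinbielAux.pw mul x k)
      rw [hyx] at h
      simp only [map_zero, LinearMap.zero_apply] at h
      have hk1 : mul (ZinbielAux.pw mul x k) x = ((k+1 : ℕ) : ℂ) • ZinbielAux.pw mul x (k+1) := by
        have h2 := ZinbielAux.pw_mul' hzin x k 0
        rw [show ZinbielAux.pw mul x 0 = x from rfl] at h2
        simpa using h2
      rw [hk1, map_smul,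
        show (mul x) (ZinbielAux.pw mul x k) = ZinbielAux.pw mul x (k+1) from rfl] at h
      have h3 : ((k+2 : ℕ) : ℂ) • mul y (ZinbielAux.pw mul x (k+1)) = 0 := by
        rw [show ((k+2:ℕ):ℂ) = 1 + ((k+1:ℕ):ℂ) by push_cast; ring, add_smul, one_smul]
        exact h.symm
      rcases smul_eq_zero.mp h3 with h' | h'
      · exact absurd h' (Nat.cast_ne_zero.mpr (by omega))
      · exact h'
  have hxy : mul x y = 0 := by
    obtain ⟨γ, hγ⟩ := hcoef 2 le_rfl (by omega) _ (hmulW x hxW 1 le_rfl y hyW)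
    have hγ' : mul x y = (γ * c2⁻¹) • ZinbielAux.pw mul x 1 := by
      rw [hγ, he2pw, smul_smul]
    have h := hzin x y x
    rw [hyx, map_zero, zero_add, hγ'] at h
    -- h : mul ((γc2⁻¹) • pw 1) x = mul x ((γc2⁻¹) • pw 1)
    rw [map_smul, LinearMap.smul_apply, map_smul] at h
    have h10 : mul (ZinbielAux.pw mul x 1) x = (2 : ℂ) • ZinbielAux.pw mul x 2 := by
      have h2 := ZinbielAux.pw_mul' hzin x 1 0
      norm_num at h2
      exact h2
    rw [h10, show (mul x) (ZinbielAux.pw mul x 1) = ZinbielAux.pw mul x 2 from rfl] at h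
    -- h : (γc2⁻¹) • (2 • pw 2) = (γc2⁻¹) • pw 2
    have h3 : (γ * c2⁻¹) • ZinbielAux.pw mul x 2 = 0 := by
      have h4 : ((γ * c2⁻¹) * 2 - (γ * c2⁻¹)) • ZinbielAux.pw mul x 2 = 0 := by
        rw [sub_smul, ← smul_smul, h, sub_self]
      have h5 : ((γ * c2⁻¹) * 2 - (γ * c2⁻¹)) = γ * c2⁻¹ := by ring
      rwa [h5] at h4
    rcases smul_eq_zero.mp h3 with h' | h'
    · rw [hγ', h', zero_smul]
    · exact absurd h' hpw2
  have hpwy : ∀ k, mul (ZinbielAux.pw mul x k) y = 0 := by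
    intro k
    induction k with
    | zero => exact hxy
    | succ k ihk =>
      have h := hzin x (ZinbielAux.pw mul x k) y
      rw [ihk, hyxk k] at h
      simp only [map_zero, add_zero] at h
      exact h
  have hyy : mul y y = 0 := by
    obtain ⟨δ, hδ⟩ := hcoef 2 le_rfl (by omega) _ (hmulW y hyW 1 le_rfl y hyW)
    have hδ' : mul y y = (δ * c2⁻¹) • ZinbielAux.pw mul x 1 := by
      rw [hδ, he2pw, smul_smul]
    have h := hzin y y x
    rw [hyx, hxy, map_zero, add_zero, hδ'] at h
    rw [map_smul, LinearMap.smul_apply] at h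
    have h10 : mul (ZinbielAux.pw mul x 1) x = (2 : ℂ) • ZinbielAux.pw mul x 2 := by
      have h2 := ZinbielAux.pw_mul' hzin x 1 0
      norm_num at h2
      exact h2
    rw [h10] at h
    -- h : (δc2⁻¹) • (2 • pw 2) = 0
    rw [smul_smul] at h
    rcases smul_eq_zero.mp h with h' | h'
    · rw [hδ']
      rcases mul_eq_zero.mp h' with h'' | h''
      · rw [h'', zero_smul]
      · exact absurd h'' two_ne_zero
    · exact absurd h' hpw2
  -- Part F : the basis and the isomorphism
  have hxyspan : W 1 = Submodule.span ℂ {x, y} := by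
    have hle : Submodule.span ℂ {x, y} ≤ W 1 :=
      Submodule.span_le.mpr (Set.insert_subset_iff.mpr ⟨hxW, Set.singleton_subset_iff.mpr hyW⟩)
    refine (Submodule.eq_of_le_of_finrank_le hle ?_).symm
    rw [hW1rk]
    have hlt : Submodule.span ℂ {x} < Submodule.span ℂ ({x, y} : Set A) := by
      refine lt_of_le_of_ne (Submodule.span_mono (by simp)) fun heq => hynot ?_
      rw [heq]
      exact Submodule.subset_span (by simp)
    have h1 : Module.finrank ℂ (Submodule.span ℂ ({x} : Set A)) = 1 :=
      finrank_span_singleton (K := ℂ) hx0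
    have h2 := Submodule.finrank_lt_finrank_of_lt hlt
    omega
  set b : Fin n → A := fun i => if (i : ℕ) < n-1 then ZinbielAux.pw mul x (i : ℕ) else y
    with hbdef
  have hbmid : ∀ k : Fin n, (k:ℕ) < n-1 → b k = ZinbielAux.pw mul x (k:ℕ) := by
    intro k hk
    simp only [hbdef]
    rw [if_pos hk]
  have hblast : ∀ k : Fin n, ¬((k:ℕ) < n-1) → b k = y := by
    intro k hk
    simp only [hbdef]
    rw [if_neg hk]
  have hbspan : ⊤ ≤ Submodule.span ℂ (Set.range b) := by
    rw [← hsup]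
    refine iSup_le fun i => ?_
    rcases Nat.lt_or_ge i 1 with h0 | h1
    · rw [show i = 0 by omega, hW0]
      exact bot_le
    rcases Nat.lt_or_ge i n with hin | hin
    · rcases Nat.lt_or_ge i 2 with hi1 | hi2
      · rw [show i = 1 by omega, hxyspan, Submodule.span_le]
        rintro z (rfl | rfl)
        · apply Submodule.subset_span
          refine ⟨⟨0, by omega⟩, ?_⟩
          rw [hbmid ⟨0, by omega⟩ (by simp; omega)]
          rfl
        · apply Submodule.subset_span
          refine ⟨⟨n-1, by omega⟩, ?_⟩
          rw [hblast ⟨n-1, by omega⟩ (by simp)]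
      · rw [(he i hi2 (by omega)).2.2, Submodule.span_le]
        intro z hz
        rw [Set.mem_singleton_iff] at hz
        subst hz
        obtain ⟨c, hc0, hc⟩ := hxc i hi2 (by omega)
        have hei : e i = c⁻¹ • ZinbielAux.pw mul x (i-1) := by
          rw [hc, inv_smul_smul₀ hc0]
        rw [hei]
        refine Submodule.smul_mem _ _ (Submodule.subset_span ⟨⟨i-1, by omega⟩, ?_⟩)
        rw [hbmid ⟨i-1, by omega⟩ (by simp; omega)]
    · rw [hWbot i hin]
      exact bot_le
  have hcard : Fintype.card (Fin n) = Module.finrank ℂ A := by simp [hdim]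
  set B := basisOfTopLeSpanOfCardEqFinrank b hbspan hcard with hBdef
  have hB : ∀ i, B i = b i := fun i => by
    rw [hBdef, coe_basisOfTopLeSpanOfCardEqFinrank]
  set E := Pi.basisFun ℂ (Fin n) with hEdef
  set f := B.equiv E (Equiv.refl _) with hfdef
  refine ⟨f, ?_⟩
  have hfB : ∀ i, f (B i) = Pi.single i 1 := by
    intro i
    rw [hfdef, Module.Basis.equiv_apply, hEdef, Equiv.refl_apply]
    exact Pi.basisFun_apply ℂ (Fin n) i
  have key : LinearMap.compr₂ mul f.toLinearMap
      = (mulOf n (F1c n)).compl₁₂ f.toLinearMap f.toLinearMap := by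
    apply LinearMap.ext_basis B B
    intro i j
    rw [LinearMap.compr₂_apply, LinearMap.compl₁₂_apply]
    have hfB' : ∀ i, f.toLinearMap (B i) = Pi.single i 1 := hfB
    rw [hfB' i, hfB' j, mulOf_single]
    by_cases hi : (i:ℕ) < n-1
    · by_cases hj : (j:ℕ) < n-1
      · rw [hB i, hB j, hbmid i hi, hbmid j hj, ZinbielAux.pw_mul' hzin x i j]
        by_cases hij : (i:ℕ)+(j:ℕ)+1 < n-1
        · have hk0 : ZinbielAux.pw mul x ((i:ℕ)+(j:ℕ)+1) = b ⟨(i:ℕ)+(j:ℕ)+1, by omega⟩ := by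
            rw [hbmid ⟨(i:ℕ)+(j:ℕ)+1, by omega⟩ (by simpa using hij)]
          rw [hk0, ← hB ⟨(i:ℕ)+(j:ℕ)+1, by omega⟩, map_smul]
          have : f.toLinearMap (B ⟨(i:ℕ)+(j:ℕ)+1, by omega⟩)
              = Pi.single (⟨(i:ℕ)+(j:ℕ)+1, by omega⟩ : Fin n) 1 := hfB _
          rw [this]
          funext k
          simp only [F1c, Pi.smul_apply, Pi.single_apply, smul_eq_mul]
          by_cases hk : k = (⟨(i:ℕ)+(j:ℕ)+1, by omega⟩ : Fin n)
          · rw [if_pos hk]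
            have hkv : (k:ℕ) = (i:ℕ)+(j:ℕ)+1 := by rw [hk]
            rw [if_pos ⟨hkv.symm, by omega⟩]
            ring
          · rw [if_neg hk, mul_zero]
            have hnot : ¬((i:ℕ)+(j:ℕ)+1 = (k:ℕ) ∧ (k:ℕ)+1 ≤ n-1) := by
              rintro ⟨h1, _⟩
              exact hk (Fin.ext h1.symm)
            rw [if_neg hnot]
        · rw [hpwzero ((i:ℕ)+(j:ℕ)+1) (by omega), smul_zero, map_zero]
          funext k
          simp only [F1c, Pi.zero_apply]
          have hnot : ¬((i:ℕ)+(j:ℕ)+1 = (k:ℕ) ∧ (k:ℕ)+1 ≤ n-1) := by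
            rintro ⟨h1, h2⟩
            omega
          rw [if_neg hnot]
      · rw [hB i, hB j, hbmid i hi, hblast j hj, hpwy (i:ℕ), map_zero]
        funext k
        simp only [F1c, Pi.zero_apply]
        have hjv : (j:ℕ) = n-1 := by have := j.isLt; omega
        have hnot : ¬((i:ℕ)+(j:ℕ)+1 = (k:ℕ) ∧ (k:ℕ)+1 ≤ n-1) := by
          rintro ⟨h1, h2⟩
          have := k.isLt
          omega
        rw [if_neg hnot]
    · rw [hB i, hB j, hblast i hi]
      have hiv : (i:ℕ) = n-1 := by have := i.isLt; omega
      have hy0 : mul y (b j) = 0 := by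
        by_cases hj : (j:ℕ) < n-1
        · rw [hbmid j hj]
          exact hyxk (j:ℕ)
        · rw [hblast j hj]
          exact hyy
      rw [hy0, map_zero]
      funext k
      simp only [F1c, Pi.zero_apply]
      have hnot : ¬((i:ℕ)+(j:ℕ)+1 = (k:ℕ) ∧ (k:ℕ)+1 ≤ n-1) := by
        rintro ⟨h1, h2⟩
        have := k.isLt
        omega
      rw [if_neg hnot]
  intro a c
  have h := LinearMap.congr_fun₂ key a c
  rw [LinearMap.compr₂_apply, LinearMap.compl₁₂_apply] at h
  exact h
end

section
/- For n ≥ 5, the three n-dimensional complex Zinbiel algebras F_n^1, F_n^2, F_n^3 are pairwise non-isomorphic. -/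
/-!
Two properties of a multiplication are invariant under isomorphism: that the right annihilator
`ker mul.flip = {x | ∀ a, a ∘ x = 0}` lies in the left annihilator `ker mul`, and that it lies
in `A² = map₂ mul ⊤ ⊤`. In `F_n^1` and `F_n^3` the right annihilator lies in the left one, while
in `F_n^2` the vector `e_n` annihilates from the right but `e_n ∘ e_1 = e_{n-1}`. In `F_n^3` the
right annihilator is `ℂ e_{n-1} = ℂ (e_n ∘ e_n) ⊆ A²`, while in `F_n^1` it contains `e_n`, which
is not a product since no structure constant reaches `e_n`. Basis vectors are `Pi.single i 1`
with `0`-based `i : Fin n`, so `e_n` is `Pi.single (Fin.last _) 1`.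
-/

open LinearMap Submodule

section Invariants

variable {A B : Type*} [AddCommGroup A] [Module ℂ A] [AddCommGroup B] [Module ℂ B]
  {mulA : A →ₗ[ℂ] A →ₗ[ℂ] A} {mulB : B →ₗ[ℂ] B →ₗ[ℂ] B} {f : A ≃ₗ[ℂ] B}

lemma comap_ker_of_intertwines (hf : ∀ x y, f (mulA x y) = mulB (f x) (f y)) :
    (ker mulB).comap (f : A →ₗ[ℂ] B) = ker mulA := by
  ext x
  simp only [mem_comap, mem_ker, LinearMap.ext_iff, LinearMap.zero_apply]
  rw [f.surjective.forall]
  simp [← hf]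

lemma comap_ker_flip_of_intertwines (hf : ∀ x y, f (mulA x y) = mulB (f x) (f y)) :
    (ker mulB.flip).comap (f : A →ₗ[ℂ] B) = ker mulA.flip := by
  ext x
  simp only [mem_comap, mem_ker, LinearMap.ext_iff, flip_apply, LinearMap.zero_apply]
  rw [f.surjective.forall]
  simp [← hf]

lemma comap_map₂_of_intertwines (hf : ∀ x y, f (mulA x y) = mulB (f x) (f y)) :
    (map₂ mulB ⊤ ⊤).comap (f : A →ₗ[ℂ] B) = map₂ mulA ⊤ ⊤ := by
  have hmap : (map₂ mulA ⊤ ⊤).map (f : A →ₗ[ℂ] B) = map₂ mulB ⊤ ⊤ := by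
    have htop : (⊤ : Submodule ℂ A).map (f : A →ₗ[ℂ] B) = ⊤ := by
      rw [Submodule.map_top, LinearEquiv.range]
    rw [map_map₂, ← htop, map₂_map_map]
    congr 1
    ext x y
    exact hf x y
  rw [← hmap, comap_map_eq_of_injective f.injective]

namespace Isom

lemma ker_flip_le_ker_iff (h : Isom mulA mulB) :
    ker mulA.flip ≤ ker mulA ↔ ker mulB.flip ≤ ker mulB := by
  obtain ⟨f, hf⟩ := h
  rw [← comap_ker_of_intertwines hf, ← comap_ker_flip_of_intertwines hf,
    comap_le_comap_iff_of_surjective f.surjective]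

lemma ker_flip_le_map₂_iff (h : Isom mulA mulB) :
    ker mulA.flip ≤ map₂ mulA ⊤ ⊤ ↔ ker mulB.flip ≤ map₂ mulB ⊤ ⊤ := by
  obtain ⟨f, hf⟩ := h
  rw [← comap_map₂_of_intertwines hf, ← comap_ker_flip_of_intertwines hf,
    comap_le_comap_iff_of_surjective f.surjective]

end Isom

end Invariants

section StructureConstants

variable {n : ℕ} {c : Fin n → Fin n → Fin n → ℂ}

lemma mulOf_apply (x y : Fin n → ℂ) (k : Fin n) :
    mulOf n c x y k = ∑ i, ∑ j, x i * y j * c i j k :=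
  rfl

lemma mulOf_single_left_apply (u : Fin n) (x : Fin n → ℂ) (k : Fin n) :
    mulOf n c (Pi.single u 1) x k = ∑ j, x j * c u j k := by
  simp [mulOf, Pi.single_apply]

lemma mulOf_single_single (u v : Fin n) :
    mulOf n c (Pi.single u 1) (Pi.single v 1) = c u v := by
  ext k
  simp [mulOf_single_left_apply, Pi.single_apply]

lemma mem_ker_mulOf_of_forall {x : Fin n → ℂ} (h : ∀ i, x i = 0 ∨ ∀ j k, c i j k = 0) :
    x ∈ ker (mulOf n c) := by
  refine LinearMap.ext fun y => funext fun k => ?_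
  rw [LinearMap.zero_apply, Pi.zero_apply, mulOf_apply]
  refine Finset.sum_eq_zero fun i _ => ?_
  rcases h i with hi | hi <;> simp [hi]

lemma single_mem_ker_flip_mulOf {v : Fin n} (h : ∀ i k, c i v k = 0) :
    Pi.single v 1 ∈ ker (mulOf n c).flip := by
  refine LinearMap.ext fun a => funext fun k => ?_
  simp [mulOf_apply, Pi.single_apply, h]

lemma map₂_mulOf_le_ker_proj {k : Fin n} (h : ∀ i j, c i j k = 0) :
    map₂ (mulOf n c) ⊤ ⊤ ≤ ker (LinearMap.proj k) :=
  map₂_le.mpr fun x _ y _ => by simp [mulOf_apply, h]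

lemma apply_eq_zero_of_mem_ker_flip {x : Fin n → ℂ} (hx : x ∈ ker (mulOf n c).flip)
    {u j k : Fin n} (hc : c u j k ≠ 0) (hc' : ∀ j' ≠ j, c u j' k = 0) : x j = 0 := by
  have h := congr_fun (LinearMap.congr_fun hx (Pi.single u 1)) k
  rw [flip_apply, mulOf_single_left_apply, Fintype.sum_eq_single j fun j' hj' => by
    rw [hc' j' hj', mul_zero]] at h
  exact (mul_eq_zero.mp h).resolve_right hc

end StructureConstants

section Filiform

lemma F1c_eq_zero_of_sub_two_le {n : ℕ} {i j k : Fin n} (hi : n - 2 ≤ i) : F1c n i j k = 0 := by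
  have := k.isLt
  simp only [F1c, ite_eq_right_iff]
  omega

lemma F1c_eq_zero_of_col_last {n : ℕ} {i j k : Fin n} (hj : (j : ℕ) + 1 = n) :
    F1c n i j k = 0 := by
  simp only [F1c, ite_eq_right_iff]
  omega

lemma F1c_eq_zero_of_last {n : ℕ} {i j k : Fin n} (hk : (k : ℕ) + 1 = n) : F1c n i j k = 0 := by
  simp only [F1c, ite_eq_right_iff]
  omega

/-- For `u = 0` and `j + 3 ≤ n`, the coordinate `j + 1` of `e_u ∘ x` is `x j`. -/
lemma apply_eq_zero_of_mem_ker_flip_of_row_eq_F1c {n : ℕ} {c : Fin n → Fin n → Fin n → ℂ}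
    {x : Fin n → ℂ} (hx : x ∈ ker (mulOf n c).flip) {u : Fin n} (hu : (u : ℕ) = 0)
    (hc : ∀ j k, c u j k = F1c n u j k) {j : Fin n} (hj : (j : ℕ) + 3 ≤ n) : x j = 0 := by
  refine apply_eq_zero_of_mem_ker_flip hx (u := u) (k := ⟨j + 1, by omega⟩) ?_ fun j' hj' => ?_
  · simp only [hc, F1c, hu]
    rw [if_pos (by omega)]
    simp
  · simp only [hc, F1c, hu, ite_eq_right_iff]
    exact fun h => absurd (Fin.ext (by simp at h; omega)) hj'

lemma F1_ker_flip_le_ker (n : ℕ) : ker (mulOf n (F1c n)).flip ≤ ker (mulOf n (F1c n)) := by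
  intro x hx
  refine mem_ker_mulOf_of_forall fun i => ?_
  by_cases hi : n - 2 ≤ i
  · exact .inr fun j k => F1c_eq_zero_of_sub_two_le hi
  · exact .inl <| apply_eq_zero_of_mem_ker_flip_of_row_eq_F1c hx (u := ⟨0, by omega⟩) rfl
      (fun _ _ => rfl) (by omega)

lemma F1_not_ker_flip_le_map₂ (m : ℕ) :
    ¬ ker (mulOf (m + 1) (F1c (m + 1))).flip ≤ map₂ (mulOf (m + 1) (F1c (m + 1))) ⊤ ⊤ := by
  intro h
  have hlast := h <|
    single_mem_ker_flip_mulOf fun i k => F1c_eq_zero_of_col_last (j := Fin.last m) rfl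
  have := map₂_mulOf_le_ker_proj (fun i j => F1c_eq_zero_of_last (k := Fin.last m) rfl) hlast
  simp at this

variable (m : ℕ)

lemma F2c_eq_zero_of_col_last (i k : Fin (m + 2)) : F2c (m + 2) i (Fin.last (m + 1)) k = 0 := by
  simp [F2c, F1c_eq_zero_of_col_last]

lemma F2_not_ker_flip_le_ker :
    ¬ ker (mulOf (m + 2) (F2c (m + 2))).flip ≤ ker (mulOf (m + 2) (F2c (m + 2))) := by
  intro h
  have hlast := h (single_mem_ker_flip_mulOf (F2c_eq_zero_of_col_last m))
  have := congr_fun (LinearMap.congr_fun hlast (Pi.single 0 1)) (Fin.last m).castSucc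
  simp [mulOf_single_single, F2c, F1c_eq_zero_of_sub_two_le] at this

lemma F3c_eq_zero_of_row_sub_two (j k : Fin (m + 2)) :
    F3c (m + 2) (Fin.last m).castSucc j k = 0 := by
  simp [F3c, F1c_eq_zero_of_sub_two_le]

lemma F3c_last_last : F3c (m + 2) (Fin.last (m + 1)) (Fin.last (m + 1)) =
    Pi.single (Fin.last m).castSucc 1 := by
  ext k
  simp [F3c, F1c_eq_zero_of_sub_two_le, Pi.single_apply, Fin.ext_iff]

lemma F3_ker_flip_le_span_single :
    ker (mulOf (m + 2) (F3c (m + 2))).flip ≤ ℂ ∙ Pi.single (Fin.last m).castSucc 1 := by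
  intro x hx
  have hcoord : ∀ k ≠ (Fin.last m).castSucc, x k = 0 := by
    intro k hk
    by_cases hk3 : (k : ℕ) + 3 ≤ m + 2
    · exact apply_eq_zero_of_mem_ker_flip_of_row_eq_F1c hx (u := 0) rfl
        (fun j k => by simp [F3c]) hk3
    · obtain rfl : k = Fin.last (m + 1) := by
        rw [Ne, Fin.ext_iff] at hk
        ext
        simp at hk ⊢
        omega
      refine apply_eq_zero_of_mem_ker_flip hx (u := Fin.last (m + 1))
        (k := (Fin.last m).castSucc) (by simp [F3c_last_last]) fun j hj => ?_
      simp [F3c, F1c_eq_zero_of_sub_two_le, Fin.ext_iff] at hj ⊢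
      omega
  refine mem_span_singleton.mpr ⟨x (Fin.last m).castSucc, funext fun k => ?_⟩
  by_cases hk : k = (Fin.last m).castSucc
  · simp [hk]
  · simp [hk, hcoord k hk]

lemma F3_ker_flip_le_ker :
    ker (mulOf (m + 2) (F3c (m + 2))).flip ≤ ker (mulOf (m + 2) (F3c (m + 2))) :=
  (F3_ker_flip_le_span_single m).trans <| (span_singleton_le_iff_mem _ _).mpr <|
    mem_ker_mulOf_of_forall fun i => by
      by_cases hi : i = (Fin.last m).castSucc
      · exact .inr (hi ▸ F3c_eq_zero_of_row_sub_two m)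
      · simp [hi]

lemma F3_ker_flip_le_map₂ :
    ker (mulOf (m + 2) (F3c (m + 2))).flip ≤ map₂ (mulOf (m + 2) (F3c (m + 2))) ⊤ ⊤ := by
  refine (F3_ker_flip_le_span_single m).trans <| (span_singleton_le_iff_mem _ _).mpr ?_
  have := apply_mem_map₂ (mulOf (m + 2) (F3c (m + 2)))
    (m := Pi.single (Fin.last (m + 1)) 1) (n := Pi.single (Fin.last (m + 1)) 1) mem_top mem_top
  rwa [mulOf_single_single, F3c_last_last] at this

end Filiform

/-- For `n ≥ 5`, the algebras `F_n^1`, `F_n^2`, `F_n^3` are pairwise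
non-isomorphic. -/
theorem filiform_pairwise_nonisomorphic (n : ℕ) (hn : 5 ≤ n) :
    ¬ Isom (mulOf n (F1c n)) (mulOf n (F2c n)) ∧
    ¬ Isom (mulOf n (F1c n)) (mulOf n (F3c n)) ∧
    ¬ Isom (mulOf n (F2c n)) (mulOf n (F3c n)) := by
  obtain ⟨m, rfl⟩ : ∃ m, n = m + 2 := ⟨n - 2, by omega⟩
  refine ⟨fun h => ?_, fun h => ?_, fun h => ?_⟩
  · exact F2_not_ker_flip_le_ker m (h.ker_flip_le_ker_iff.mp (F1_ker_flip_le_ker _))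
  · exact F1_not_ker_flip_le_map₂ (m + 1)
      (h.ker_flip_le_map₂_iff.mpr (F3_ker_flip_le_map₂ m))
  · exact F2_not_ker_flip_le_ker m (h.ker_flip_le_ker_iff.mpr (F3_ker_flip_le_ker m))
end
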